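/- Let p be a prime and D_k a set of k distinct positive integers whose gcd d is not divisible by p, with D_k' = (1/d)·D_k, and suppose ν_{{0}∪D_k'}(p) < p and S({0}∪D_k) ≠ 0. Then S({0} ∪ p·D_k) = S({0} ∪ D_k) · (1 + (ν_p - 1)/(p - ν_p)), where ν_p = ν_{{0}∪D_k'}(p) and p·D_k = {p d_1, ..., p d_k}. -/

import Mathlib

/-!
Multiplication by `p` permutes the residues modulo every prime `q ≠ p`, so it changes neither
`ν_q` nor `|D|`, while it collapses `{0} ∪ p·D` into the single class `0` modulo `p`; likewise
dividing by the gcd, which is prime to `p`, does not change `ν_p`. Hence the two Euler products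
differ only in their factor at `p`, and the ratio of those factors is `(1 - 1/p) / (1 - ν_p/p)`.
Pulling out one factor is legitimate because the Euler product converges: for `q > max D` the
factor is `(1 - |D|/q) (1 - 1/q)^{-|D|} = 1 + O(1/q²)`.
-/

open Finset

/-- Number of residue classes mod `p` occupied by the elements of `D`. -/
def nu (D : Finset ℕ) (p : ℕ) : ℕ := (D.image (· % p)).card

/-- The Hardy–Littlewood singular series of a finite set `D`. -/
noncomputable def singSeries (D : Finset ℕ) : ℝ :=
  ∏' p : Nat.Primes, ((1 - 1 / ((p : ℕ) : ℝ)) ^ D.card)⁻¹ * (1 - (nu D (p : ℕ) : ℝ) / ((p : ℕ) : ℝ))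

/-- `primePi x D` counts positive integers `m ≤ x` with `m + d` prime for all `d ∈ D`. -/
noncomputable def primePi (x : ℝ) (D : Finset ℕ) : ℕ :=
  {m : ℕ | 0 < m ∧ (m : ℝ) ≤ x ∧ ∀ d ∈ D, Nat.Prime (m + d)}.ncard

/-- `Ncham x D` counts `n` such that `p_{n+k} ≤ x` and the gaps `p_{n+i} - p_n` for
`i = 1, …, k` are exactly the elements of `D` (with `k = D.card`). -/
noncomputable def Ncham (x : ℝ) (D : Finset ℕ) : ℕ :=
  {n : ℕ | ((Nat.nth Nat.Prime (n + D.card) : ℝ) ≤ x) ∧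
    (Finset.range D.card).image
      (fun i => Nat.nth Nat.Prime (n + i + 1) - Nat.nth Nat.Prime n) = D}.ncard

/-- `D` is a `k`-tuple jumping champion for `x`. -/
def IsChampion (k : ℕ) (x : ℝ) (D : Finset ℕ) : Prop :=
  D.card = k ∧ (∀ d ∈ D, 0 < d) ∧
    ∀ D' : Finset ℕ, D'.card = k → (∀ d ∈ D', 0 < d) → Ncham x D' ≤ Ncham x D

/-- Number of prime factors counted with multiplicity. -/
def bigOmega (n : ℕ) : ℕ := n.primeFactorsList.length

/-- The `n`-th primorial `2·3·5⋯p_n`. -/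
noncomputable def primorial' (n : ℕ) : ℕ := ∏ i ∈ Finset.range n, Nat.nth Nat.Prime i

/-- The largest primorial not exceeding `y` (equal to `1` if `y < 1`). -/
noncomputable def largestPrimorial (y : ℝ) : ℕ :=
  primorial' (sSup {n : ℕ | (primorial' n : ℝ) ≤ y})

lemma nu_image_mul_of_coprime {q a : ℕ} (D : Finset ℕ) (h : q.Coprime a) :
    nu (D.image (a * ·)) q = nu D q := by
  have himage : (D.image (a * ·)).image (· % q) = (D.image (· % q)).image (a * · % q) := by
    simp only [image_image]
    exact image_congr fun x _ => by simp [Function.comp, Nat.mul_mod_mod]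
  rw [nu, nu, himage, card_image_of_injOn]
  rintro _ hr _ hs hrs
  obtain ⟨x, -, rfl⟩ := mem_image.1 (mem_coe.1 hr)
  obtain ⟨y, -, rfl⟩ := mem_image.1 (mem_coe.1 hs)
  simpa [Nat.ModEq, Nat.mod_mod] using Nat.ModEq.cancel_left_of_coprime h hrs

lemma nu_image_mul_self {D : Finset ℕ} (hD : D.Nonempty) (p : ℕ) :
    nu (D.image (p * ·)) p = 1 := by
  have hzero : (D.image (p * ·)).image (· % p) = D.image fun _ => 0 := by
    simp only [image_image]
    exact image_congr fun d _ => Nat.mul_mod_right p d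
  rw [nu, hzero, image_const hD, card_singleton]

lemma nu_eq_card_of_forall_lt {D : Finset ℕ} {q : ℕ} (h : ∀ d ∈ D, d < q) : nu D q = #D := by
  rw [nu, image_congr fun d hd => Nat.mod_eq_of_lt (h d hd), image_id']

lemma abs_one_sub_pow_sub_one_sub_mul_le (n : ℕ) {t : ℝ} (h0 : 0 ≤ t) (h1 : t ≤ 1) :
    |(1 - t) ^ n - (1 - n * t)| ≤ n ^ 2 * t ^ 2 := by
  induction n with
  | zero => simp
  | succ n ih =>
    have hstep : (1 - t) ^ (n + 1) - (1 - ((n + 1 : ℕ) : ℝ) * t)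
        = (1 - t) * ((1 - t) ^ n - (1 - n * t)) + n * t ^ 2 := by
      push_cast; ring
    have hcontract : |1 - t| ≤ 1 := abs_le.2 ⟨by linarith, by linarith⟩
    calc |(1 - t) ^ (n + 1) - (1 - ((n + 1 : ℕ) : ℝ) * t)|
        ≤ |(1 - t) * ((1 - t) ^ n - (1 - n * t))| + |n * t ^ 2| := hstep ▸ abs_add_le _ _
      _ = |1 - t| * |(1 - t) ^ n - (1 - n * t)| + n * t ^ 2 := by
          rw [abs_mul, abs_of_nonneg (by positivity : (0 : ℝ) ≤ n * t ^ 2)]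
      _ ≤ 1 * (n ^ 2 * t ^ 2) + n * t ^ 2 := by gcongr
      _ ≤ ((n + 1 : ℕ) : ℝ) ^ 2 * t ^ 2 := by push_cast; nlinarith [sq_nonneg t]

lemma abs_one_sub_mul_div_one_sub_pow_sub_one_le (n : ℕ) {t : ℝ} (h0 : 0 ≤ t) (h1 : t ≤ 1 / 2) :
    |(1 - n * t) / (1 - t) ^ n - 1| ≤ 2 ^ n * n ^ 2 * t ^ 2 := by
  have hhalf : (1 / 2 : ℝ) ^ n ≤ (1 - t) ^ n := by gcongr; linarith
  have hpos : 0 < (1 - t) ^ n := lt_of_lt_of_le (by positivity) hhalf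
  rw [div_sub_one hpos.ne', abs_div, abs_of_pos hpos, abs_sub_comm, div_le_iff₀ hpos]
  calc |(1 - t) ^ n - (1 - n * t)| ≤ n ^ 2 * t ^ 2 :=
        abs_one_sub_pow_sub_one_sub_mul_le n h0 (by linarith)
    _ = 2 ^ n * n ^ 2 * t ^ 2 * (1 / 2) ^ n := by
        rw [one_div, inv_pow]; field_simp
    _ ≤ 2 ^ n * n ^ 2 * t ^ 2 * (1 - t) ^ n := by gcongr

noncomputable def localFactor (D : Finset ℕ) (q : ℕ) : ℝ :=
  ((1 - 1 / (q : ℝ)) ^ #D)⁻¹ * (1 - (nu D q : ℝ) / q)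

lemma singSeries_eq_tprod_localFactor (D : Finset ℕ) :
    singSeries D = ∏' q : Nat.Primes, localFactor D q := rfl

lemma localFactor_image_mul_of_coprime {q a : ℕ} (D : Finset ℕ) (ha : a ≠ 0) (h : q.Coprime a) :
    localFactor (D.image (a * ·)) q = localFactor D q := by
  rw [localFactor, localFactor, card_image_of_injective _ (mul_right_injective₀ ha),
    nu_image_mul_of_coprime D h]

lemma localFactor_image_mul_self {D : Finset ℕ} {p : ℕ} (hp : p.Prime) (hD : D.Nonempty)
    (hν : nu D p < p) :
    localFactor (D.image (p * ·)) p = localFactor D p * ((1 - 1 / p) / (1 - nu D p / p)) := by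
  have hp0 : (0 : ℝ) < p := by exact_mod_cast hp.pos
  have hνp : (nu D p : ℝ) < p := by exact_mod_cast hν
  have hden : 1 - (nu D p : ℝ) / p ≠ 0 := sub_ne_zero.2 (ne_of_gt ((div_lt_one hp0).2 hνp))
  rw [localFactor, localFactor, card_image_of_injective _ (mul_right_injective₀ hp.ne_zero),
    nu_image_mul_self hD, Nat.cast_one, mul_assoc, mul_div_cancel₀ _ hden]

lemma abs_localFactor_sub_one_le {D : Finset ℕ} {q : ℕ} (hq : 2 ≤ q) (h : ∀ d ∈ D, d < q) :
    |localFactor D q - 1| ≤ 2 ^ #D * #D ^ 2 / q ^ 2 := by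
  have hq' : (2 : ℝ) ≤ q := by exact_mod_cast hq
  have hlocal : localFactor D q = (1 - #D * (1 / q : ℝ)) / (1 - 1 / q) ^ #D := by
    rw [localFactor, nu_eq_card_of_forall_lt h]; ring
  rw [hlocal, div_eq_mul_one_div _ ((q : ℝ) ^ 2), ← one_div_pow]
  refine abs_one_sub_mul_div_one_sub_pow_sub_one_le _ (by positivity) ?_
  rw [one_div_le_one_div (by linarith) two_pos]; exact hq'

lemma multipliable_localFactor (D : Finset ℕ) :
    Multipliable fun q : Nat.Primes => localFactor D q := by
  have hlarge : ∀ᶠ q : Nat.Primes in Filter.cofinite, D.sup id < q :=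
    Subtype.coe_injective.tendsto_cofinite.eventually
      (Nat.cofinite_eq_atTop ▸ Filter.eventually_gt_atTop _)
  have hsum : Summable fun q : Nat.Primes => localFactor D q - 1 := by
    refine Summable.of_norm_bounded_eventually
      (g := fun q : Nat.Primes => 2 ^ #D * (#D : ℝ) ^ 2 / ((q : ℕ) : ℝ) ^ 2) ?_ ?_
    · exact ((Real.summable_one_div_nat_pow.2 one_lt_two).mul_left (2 ^ #D * (#D : ℝ) ^ 2)
        |>.comp_injective Subtype.coe_injective).congr fun q => by simp [div_eq_mul_inv]
    · filter_upwards [hlarge] with q hq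
      exact abs_localFactor_sub_one_le q.2.two_le fun d hd => (le_sup (f := id) hd).trans_lt hq
  simpa using Real.multipliable_one_add_of_summable hsum

theorem singSeries_image_mul_prime {D : Finset ℕ} {p : ℕ} (hp : p.Prime) (hD : D.Nonempty)
    (hν : nu D p < p) :
    singSeries (D.image (p * ·)) = singSeries D * ((1 - 1 / p) / (1 - nu D p / p)) := by
  set c : ℝ := (1 - 1 / p) / (1 - nu D p / p)
  have hfactor : ∀ q : Nat.Primes, localFactor (D.image (p * ·)) q =
      localFactor D q * if (q : ℕ) = p then c else 1 := by
    intro q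
    split_ifs with hq
    · rw [hq]; exact localFactor_image_mul_self hp hD hν
    · rw [mul_one, localFactor_image_mul_of_coprime D hp.ne_zero ((Nat.coprime_primes q.2 hp).2 hq)]
  have hcorrection : HasProd (fun q : Nat.Primes => if (q : ℕ) = p then c else 1) c := by
    convert hasProd_single (f := fun q : Nat.Primes => if (q : ℕ) = p then c else 1) ⟨p, hp⟩
      fun q hq => if_neg fun h => hq (Subtype.ext h)
    exact (if_pos rfl).symm
  rw [singSeries_eq_tprod_localFactor, singSeries_eq_tprod_localFactor, tprod_congr hfactor]
  exact ((multipliable_localFactor D).hasProd.mul hcorrection).tprod_eq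

theorem stmt19_general (p : ℕ) (hp : p.Prime) (D : Finset ℕ)
    (hgcd : ¬ p ∣ D.gcd id)
    (hν : nu (insert 0 (D.image (· / D.gcd id))) p < p) :
    singSeries (insert 0 (D.image (fun d => p * d))) =
      singSeries (insert 0 D) *
        (1 + ((nu (insert 0 (D.image (· / D.gcd id))) p : ℝ) - 1) /
            ((p : ℝ) - (nu (insert 0 (D.image (· / D.gcd id))) p : ℝ))) := by
  set ν := nu (insert 0 (D.image (· / D.gcd id))) p
  have hrescale : insert 0 D = (insert 0 (D.image (· / D.gcd id))).image (D.gcd id * ·) := by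
    rw [image_insert, mul_zero, image_image]
    congr 1
    exact ((image_congr fun d hd => Nat.mul_div_cancel' (gcd_dvd hd)).trans image_id').symm
  have hνD : nu (insert 0 D) p = ν := by
    rw [hrescale, nu_image_mul_of_coprime _ ((Nat.Prime.coprime_iff_not_dvd hp).2 hgcd)]
  have hp0 : (0 : ℝ) < p := by exact_mod_cast hp.pos
  have hνp : (ν : ℝ) < p := by exact_mod_cast hν
  rw [show insert 0 (D.image (p * ·)) = (insert 0 D).image (p * ·) by rw [image_insert, mul_zero],
    singSeries_image_mul_prime hp (insert_nonempty 0 D) (hνD ▸ hν), hνD]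
  congr 1
  field_simp [(sub_pos.2 hνp).ne']
  ring

/-- effect on the singular series of multiplying a tuple by a prime `p`
not dividing its gcd. -/
theorem stmt19 (k : ℕ) (hk : 1 ≤ k) (p : ℕ) (hp : p.Prime) (D : Finset ℕ)
    (hcard : D.card = k) (hpos : ∀ d ∈ D, 0 < d)
    (hgcd : ¬ p ∣ D.gcd id)
    (hν : nu (insert 0 (D.image (· / D.gcd id))) p < p)
    (hS : singSeries (insert 0 D) ≠ 0) :
    singSeries (insert 0 (D.image (fun d => p * d))) =
      singSeries (insert 0 D) *
        (1 + ((nu (insert 0 (D.image (· / D.gcd id))) p : ℝ) - 1) /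
            ((p : ℝ) - (nu (insert 0 (D.image (· / D.gcd id))) p : ℝ))) :=
  stmt19_general p hp D hgcd hν
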